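/- Let ρ, u, w be smooth functions on 𝕋 × [0,T] with ρ > 0, satisfying ∂_t ρ + ∂_x(ρu) = 0 and ∂_t(ρw) + ∂_x(ρwu) = 0 pointwise. Then W := (∂_x w)/ρ satisfies the transport equation ∂_t W + u ∂_x W = 0 pointwise on 𝕋 × [0,T]. -/

import Mathlib

private lemma hasDerivAt_slice (f : ℝ × ℝ → ℝ) (hf : Differentiable ℝ f)
    {c : ℝ → ℝ × ℝ} {c' : ℝ × ℝ} {t : ℝ} (hc : HasDerivAt c c' t) :
    HasDerivAt (fun s => f (c s)) (fderiv ℝ f (c t) c') t :=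
  (hf (c t)).hasFDerivAt.comp_hasDerivAt t hc

private lemma hasDerivAt_slice2 (f : ℝ × ℝ → ℝ) (hf : ContDiff ℝ 2 f)
    {c : ℝ → ℝ × ℝ} {c' : ℝ × ℝ} {t : ℝ} (hc : HasDerivAt c c' t) (v : ℝ × ℝ) :
    HasDerivAt (fun s => fderiv ℝ f (c s) v)
      (fderiv ℝ (fderiv ℝ f) (c t) c' v) t := by
  have hD : Differentiable ℝ (fderiv ℝ f) :=
    (hf.fderiv_right (m := 1) (by norm_num)).differentiable (by norm_num)
  have h1 : HasDerivAt (fun s => fderiv ℝ f (c s)) (fderiv ℝ (fderiv ℝ f) (c t) c') t :=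
    (hD (c t)).hasFDerivAt.comp_hasDerivAt t hc
  simpa using h1.clm_apply (hasDerivAt_const t v)

private lemma curve_t (x t : ℝ) : HasDerivAt (fun s : ℝ => (x, s)) ((0 : ℝ), (1 : ℝ)) t :=
  HasDerivAt.prodMk (hasDerivAt_const t x) (hasDerivAt_id t)

private lemma curve_x (x t : ℝ) : HasDerivAt (fun y : ℝ => (y, t)) ((1 : ℝ), (0 : ℝ)) x :=
  HasDerivAt.prodMk (hasDerivAt_id x) (hasDerivAt_const x t)

/-- If `ρ, u, w` are C² on the torus (period 1 in `x`), `ρ > 0`, and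
`∂ₜρ + ∂ₓ(ρu) = 0`, `∂ₜ(ρw) + ∂ₓ(ρwu) = 0` hold pointwise, then
`W := (∂ₓw)/ρ` satisfies `∂ₜW + u ∂ₓW = 0` pointwise. -/
theorem stmt8 (T : ℝ) (hT : 0 < T) (ρ u w : ℝ → ℝ → ℝ)
    (hρ : ContDiff ℝ 2 (fun p : ℝ × ℝ => ρ p.1 p.2))
    (hu : ContDiff ℝ 2 (fun p : ℝ × ℝ => u p.1 p.2))
    (hw : ContDiff ℝ 2 (fun p : ℝ × ℝ => w p.1 p.2))
    (hρper : ∀ x t, ρ (x + 1) t = ρ x t)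
    (huper : ∀ x t, u (x + 1) t = u x t)
    (hwper : ∀ x t, w (x + 1) t = w x t)
    (hρpos : ∀ x t, 0 < ρ x t)
    (hcont : ∀ x : ℝ, ∀ t ∈ Set.Icc 0 T,
      deriv (fun s => ρ x s) t + deriv (fun y => ρ y t * u y t) x = 0)
    (hmom : ∀ x : ℝ, ∀ t ∈ Set.Icc 0 T,
      deriv (fun s => ρ x s * w x s) t +
        deriv (fun y => ρ y t * w y t * u y t) x = 0) :
    ∀ x : ℝ, ∀ t ∈ Set.Icc 0 T,
      deriv (fun s => (deriv (fun y => w y s) x) / ρ x s) t +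
        u x t * deriv (fun y => (deriv (fun z => w z t) y) / ρ y t) x = 0 := by
  intro x t ht
  set Fρ : ℝ × ℝ → ℝ := fun p => ρ p.1 p.2 with hFρ
  set Fu : ℝ × ℝ → ℝ := fun p => u p.1 p.2 with hFu
  set Fw : ℝ × ℝ → ℝ := fun p => w p.1 p.2 with hFw
  have hρd : Differentiable ℝ Fρ := hρ.differentiable (by norm_num)
  have hud : Differentiable ℝ Fu := hu.differentiable (by norm_num)
  have hwd : Differentiable ℝ Fw := hw.differentiable (by norm_num)
  -- partial derivatives
  set ρx : ℝ → ℝ → ℝ := fun a b => fderiv ℝ Fρ (a, b) (1, 0) with hρxdef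
  set ρt : ℝ → ℝ → ℝ := fun a b => fderiv ℝ Fρ (a, b) (0, 1) with hρtdef
  set ux : ℝ → ℝ → ℝ := fun a b => fderiv ℝ Fu (a, b) (1, 0) with huxdef
  set wx : ℝ → ℝ → ℝ := fun a b => fderiv ℝ Fw (a, b) (1, 0) with hwxdef
  set wt : ℝ → ℝ → ℝ := fun a b => fderiv ℝ Fw (a, b) (0, 1) with hwtdef
  -- first-order HasDerivAt facts
  have dρt : ∀ a b, HasDerivAt (fun s => ρ a s) (ρt a b) b := fun a b =>
    hasDerivAt_slice Fρ hρd (curve_t a b)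
  have dρx : ∀ a b, HasDerivAt (fun y => ρ y b) (ρx a b) a := fun a b =>
    hasDerivAt_slice Fρ hρd (curve_x a b)
  have dux : ∀ a b, HasDerivAt (fun y => u y b) (ux a b) a := fun a b =>
    hasDerivAt_slice Fu hud (curve_x a b)
  have dwx : ∀ a b, HasDerivAt (fun y => w y b) (wx a b) a := fun a b =>
    hasDerivAt_slice Fw hwd (curve_x a b)
  have dwt : ∀ a b, HasDerivAt (fun s => w a s) (wt a b) b := fun a b =>
    hasDerivAt_slice Fw hwd (curve_t a b)
  -- second-order facts
  have dwxdt : ∀ a b, HasDerivAt (fun s => wx a s)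
      (fderiv ℝ (fderiv ℝ Fw) (a, b) (0, 1) (1, 0)) b := fun a b =>
    hasDerivAt_slice2 Fw hw (curve_t a b) (1, 0)
  have dwxdx : ∀ a b, HasDerivAt (fun y => wx y b)
      (fderiv ℝ (fderiv ℝ Fw) (a, b) (1, 0) (1, 0)) a := fun a b =>
    hasDerivAt_slice2 Fw hw (curve_x a b) (1, 0)
  have dwtdx : ∀ a b, HasDerivAt (fun y => wt y b)
      (fderiv ℝ (fderiv ℝ Fw) (a, b) (1, 0) (0, 1)) a := fun a b =>
    hasDerivAt_slice2 Fw hw (curve_x a b) (0, 1)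
  -- continuity equation in partials
  have hA : ∀ a, ρt a t + (ρx a t * u a t + ρ a t * ux a t) = 0 := by
    intro a
    have h := hcont a t ht
    rwa [(dρt a t).deriv, ((dρx a t).fun_mul (dux a t)).deriv] at h
  -- momentum equation in partials
  have hB : ∀ a, (ρt a t * w a t + ρ a t * wt a t) +
      ((ρx a t * w a t + ρ a t * wx a t) * u a t + ρ a t * w a t * ux a t) = 0 := by
    intro a
    have h := hmom a t ht
    rwa [((dρt a t).fun_mul (dwt a t)).deriv,
      (((dρx a t).fun_mul (dwx a t)).fun_mul (dux a t)).deriv] at h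
  -- transport equation for w
  have hC : ∀ a, wt a t = -(u a t * wx a t) := by
    intro a
    have h1 : ρ a t * (wt a t + u a t * wx a t) = 0 := by
      linear_combination hB a - w a t * hA a
    have h2 : wt a t + u a t * wx a t = 0 :=
      (mul_eq_zero.mp h1).resolve_left (hρpos a t).ne'
    linarith
  -- differentiate hC in x
  have hD : fderiv ℝ (fderiv ℝ Fw) (x, t) (1, 0) (0, 1) =
      -(ux x t * wx x t + u x t * fderiv ℝ (fderiv ℝ Fw) (x, t) (1, 0) (1, 0)) := by
    have hfun : (fun y => wt y t) = fun y => -(u y t * wx y t) := funext fun y => hC y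
    have h2 : HasDerivAt (fun y => -(u y t * wx y t))
        (-(ux x t * wx x t + u x t * fderiv ℝ (fderiv ℝ Fw) (x, t) (1, 0) (1, 0))) x :=
      ((dux x t).mul (dwxdx x t)).neg
    have h1 := dwtdx x t
    rw [hfun] at h1
    exact h1.unique h2
  -- symmetry of second derivatives
  have hsymm : fderiv ℝ (fderiv ℝ Fw) (x, t) (0, 1) (1, 0) =
      fderiv ℝ (fderiv ℝ Fw) (x, t) (1, 0) (0, 1) := by
    have hDw : Differentiable ℝ (fderiv ℝ Fw) :=
      (hw.fderiv_right (m := 1) (by norm_num)).differentiable (by norm_num)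
    exact second_derivative_symmetric (fun y => (hwd y).hasFDerivAt)
      ((hDw (x, t)).hasFDerivAt) (0, 1) (1, 0)
  -- rewrite the goal's inner derivatives
  have e1 : (fun s => (deriv (fun y => w y s) x) / ρ x s) = fun s => wx x s / ρ x s :=
    funext fun s => by rw [(dwx x s).deriv]
  have e2 : (fun y => (deriv (fun z => w z t) y) / ρ y t) = fun y => wx y t / ρ y t :=
    funext fun y => by rw [(dwx y t).deriv]
  rw [e1, e2]
  have hne : ρ x t ≠ 0 := (hρpos x t).ne'
  have hne' : ∀ a b, ρ a b ≠ 0 := fun a b => (hρpos a b).ne'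
  rw [((dwxdt x t).fun_div (dρt x t) (hne' x t)).deriv,
    ((dwxdx x t).fun_div (dρx x t) (hne' x t)).deriv]
  rw [hsymm, hD]
  set wxx := fderiv ℝ (fderiv ℝ Fw) (x, t) (1, 0) (1, 0)
  field_simp
  linear_combination (-(wx x t)) * hA x
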